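/- Let S be an inverse semigroup, A a semilattice of abelian groups with S-module structure (α,λ), f a twisting related to (α,λ) in Z²(S¹,A¹), and Λ = (α,λ,f). The extension A ∗_Λ S of A by S splits (admits a transversal which is a homomorphism) if and only if f is a 2-coboundary, i.e., f ∈ B²(S¹,A¹). -/
import Mathlib


/-- An inverse semigroup: every element has a unique (generalized) inverse. -/
class InverseSemigroup (S : Type*) extends Semigroup S, Inv S where
  mul_inv_mul : ∀ a : S, a * a⁻¹ * a = a
  inv_mul_inv : ∀ a : S, a⁻¹ * a * a⁻¹ = a⁻¹
  inv_unique : ∀ a b : S, a * b * a = a → b * a * b = b → b = a⁻¹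

/-- `e` is an idempotent. -/
def IsIdem {S : Type*} [Mul S] (e : S) : Prop := e * e = e

/-- The natural partial order on an inverse semigroup: `a ≤ b` iff `a = e * b`
for some idempotent `e`. -/
def NatLe {S : Type*} [Mul S] (a b : S) : Prop := ∃ e, IsIdem e ∧ a = e * b

section Helpers
variable {S : Type*} [InverseSemigroup S]
open InverseSemigroup

lemma IS_inv_inv (a : S) : a⁻¹⁻¹ = a :=
  (inv_unique a⁻¹ a (inv_mul_inv a) (mul_inv_mul a)).symm

lemma IS_idem_inv {e : S} (he : IsIdem e) : e⁻¹ = e :=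
  (inv_unique e e (by rw [he, he]) (by rw [he, he])).symm

lemma IS_idem_mul_inv (s : S) : IsIdem (s * s⁻¹) := by
  show s * s⁻¹ * (s * s⁻¹) = s * s⁻¹
  rw [← mul_assoc, mul_inv_mul]

lemma IS_idem_inv_mul (s : S) : IsIdem (s⁻¹ * s) := by
  show s⁻¹ * s * (s⁻¹ * s) = s⁻¹ * s
  rw [← mul_assoc, inv_mul_inv]

lemma IS_idem_mul {e f : S} (he : IsIdem e) (hf : IsIdem f) : IsIdem (e * f) := by
  set x := (e * f)⁻¹ with hx
  have h1 : ∀ z : S, e * (f * (x * (e * (f * z)))) = e * (f * z) := fun z => by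
    have := congrArg (· * z) (mul_inv_mul (e * f))
    simpa [mul_assoc] using this
  have h2 : ∀ z : S, x * (e * (f * (x * z))) = x * z := fun z => by
    have := congrArg (· * z) (inv_mul_inv (e * f))
    simpa [mul_assoc] using this
  have he' : ∀ z : S, e * (e * z) = e * z := fun z => by rw [← mul_assoc, he]
  have hf' : ∀ z : S, f * (f * z) = f * z := fun z => by rw [← mul_assoc, hf]
  have hy1 : (e * f) * (f * x * e) * (e * f) = e * f := by
    simp only [mul_assoc]
    rw [hf', he']
    have := mul_inv_mul (e * f)
    simpa [mul_assoc] using this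
  have hy2 : (f * x * e) * (e * f) * (f * x * e) = f * x * e := by
    simp only [mul_assoc]
    rw [he', hf', h2 e]
  have hxeq : f * x * e = x := inv_unique (e * f) (f * x * e) hy1 hy2
  have hxx : IsIdem x := by
    show x * x = x
    have step : (f * x * e) * (f * x * e) = x := by
      simp only [mul_assoc]
      rw [h2 e, ← mul_assoc, hxeq]
    calc x * x = (f * x * e) * (f * x * e) := by rw [hxeq]
      _ = x := step
  have : e * f = x := by
    rw [← IS_inv_inv (e * f), ← hx, IS_idem_inv hxx]
  rw [this]; exact hxx

lemma IS_idem_comm {e f : S} (he : IsIdem e) (hf : IsIdem f) : e * f = f * e := by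
  have hef := IS_idem_mul he hf
  have hfe := IS_idem_mul hf he
  have he' : ∀ z : S, e * (e * z) = e * z := fun z => by rw [← mul_assoc, he]
  have hf' : ∀ z : S, f * (f * z) = f * z := fun z => by rw [← mul_assoc, hf]
  have h1 : (e * f) * (f * e) * (e * f) = e * f := by
    simp only [mul_assoc]
    rw [hf', he']
    have hef2 : e * f * (e * f) = e * f := hef
    simpa [mul_assoc] using hef2
  have h2 : (f * e) * (e * f) * (f * e) = f * e := by
    simp only [mul_assoc]
    rw [he', hf']
    have hfe2 : f * e * (f * e) = f * e := hfe
    simpa [mul_assoc] using hfe2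
  have := inv_unique (e * f) (f * e) h1 h2
  rw [this, IS_idem_inv hef]

lemma IS_mul_inv_rev (s t : S) : (s * t)⁻¹ = t⁻¹ * s⁻¹ := by
  have hc : (t * t⁻¹) * (s⁻¹ * s) = (s⁻¹ * s) * (t * t⁻¹) :=
    IS_idem_comm (IS_idem_mul_inv t) (IS_idem_inv_mul s)
  have h1 : (s * t) * (t⁻¹ * s⁻¹) * (s * t) = s * t := by
    calc (s * t) * (t⁻¹ * s⁻¹) * (s * t)
        = s * ((t * t⁻¹) * (s⁻¹ * s)) * t := by simp only [mul_assoc]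
      _ = s * ((s⁻¹ * s) * (t * t⁻¹)) * t := by rw [hc]
      _ = (s * s⁻¹ * s) * (t * t⁻¹ * t) := by simp only [mul_assoc]
      _ = s * t := by rw [mul_inv_mul, mul_inv_mul]
  have h2 : (t⁻¹ * s⁻¹) * (s * t) * (t⁻¹ * s⁻¹) = t⁻¹ * s⁻¹ := by
    calc (t⁻¹ * s⁻¹) * (s * t) * (t⁻¹ * s⁻¹)
        = t⁻¹ * ((s⁻¹ * s) * (t * t⁻¹)) * s⁻¹ := by simp only [mul_assoc]
      _ = t⁻¹ * ((t * t⁻¹) * (s⁻¹ * s)) * s⁻¹ := by rw [hc]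
      _ = (t⁻¹ * t * t⁻¹) * (s⁻¹ * s * s⁻¹) := by simp only [mul_assoc]
      _ = t⁻¹ * s⁻¹ := by rw [inv_mul_inv, inv_mul_inv]
  exact (inv_unique (s * t) (t⁻¹ * s⁻¹) h1 h2).symm

lemma IS_conj_idem {e : S} (s : S) (he : IsIdem e) : IsIdem (s * e * s⁻¹) := by
  show (s * e * s⁻¹) * (s * e * s⁻¹) = s * e * s⁻¹
  have hc : e * (s⁻¹ * s) = (s⁻¹ * s) * e := IS_idem_comm he (IS_idem_inv_mul s)
  calc (s * e * s⁻¹) * (s * e * s⁻¹)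
      = s * (e * (s⁻¹ * s)) * (e * s⁻¹) := by simp only [mul_assoc]
    _ = s * ((s⁻¹ * s) * e) * (e * s⁻¹) := by rw [hc]
    _ = (s * s⁻¹ * s) * (e * e) * s⁻¹ := by simp only [mul_assoc]
    _ = s * e * s⁻¹ := by rw [mul_inv_mul, he]

lemma IS_conj_absorb {e : S} (s : S) (he : IsIdem e) :
    (s * e * s⁻¹) * (s * s⁻¹) = s * e * s⁻¹ := by
  have hc : e * (s⁻¹ * s) = (s⁻¹ * s) * e := IS_idem_comm he (IS_idem_inv_mul s)
  calc (s * e * s⁻¹) * (s * s⁻¹)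
      = s * (e * (s⁻¹ * s)) * s⁻¹ := by simp only [mul_assoc]
    _ = s * ((s⁻¹ * s) * e) * s⁻¹ := by rw [hc]
    _ = (s * s⁻¹ * s) * (e * s⁻¹) := by simp only [mul_assoc]
    _ = s * e * s⁻¹ := by rw [mul_inv_mul, mul_assoc]

end Helpers

/-- An `S`-module structure `(α, λ)` on a semilattice of abelian groups `A`
(modelled as a commutative inverse semigroup): `α` is an isomorphism
`E(S) → E(A)` and `lam` is a homomorphism of `S` into endomorphisms of `A`
satisfying `λ_e(a) = α(e)a` and `λ_s(α(e)) = α(s e s⁻¹)`. -/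
structure SMod (S A : Type*) [InverseSemigroup S] [InverseSemigroup A] where
  α : S → A
  lam : S → A → A
  α_idem : ∀ e : S, IsIdem e → IsIdem (α e)
  α_mul : ∀ e f : S, IsIdem e → IsIdem f → α (e * f) = α e * α f
  α_inj : ∀ e f : S, IsIdem e → IsIdem f → α e = α f → e = f
  α_surj : ∀ g : A, IsIdem g → ∃ e : S, IsIdem e ∧ α e = g
  lam_mul : ∀ (s : S) (a b : A), lam s (a * b) = lam s a * lam s b
  lam_idem : ∀ e : S, IsIdem e → ∀ a : A, lam e a = α e * a
  lam_alpha : ∀ (s e : S), IsIdem e → lam s (α e) = α (s * e * s⁻¹)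
  lam_comp : ∀ (s t : S) (a : A), lam s (lam t a) = lam (s * t) a

/-- For a twisting `f` related to an `S`-module `(α,λ)` on `A`, the extension
`A ∗_Λ S` (with `Λ = (α,λ,f)`) splits — i.e. `j` admits a transversal
`s ↦ k(s)δ_s` which is a homomorphism — iff `f` is a 2-coboundary
`f(s,t) = λ_s(g(t)) g(st)⁻¹ g(s)`. -/
theorem stmt14 {S A : Type*} [InverseSemigroup S] [InverseSemigroup A]
    (hA : ∀ a b : A, a * b = b * a) (M : SMod S A) (f : S → S → A)
    (hmem : ∀ s t : S, f s t * (f s t)⁻¹ = M.α (s * t * t⁻¹ * s⁻¹))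
    (hcoc : ∀ s t u : S, M.lam s (f t u) * f s (t * u) = f s t * f (s * t) u)
    (hn1 : ∀ (s e : S), IsIdem e → f (s * e) e = M.α (s * e * s⁻¹))
    (hn2 : ∀ (s e : S), IsIdem e → f e (e * s) = M.α (e * s * s⁻¹)) :
    (∃ k : S → A, (∀ s : S, k s * (k s)⁻¹ = M.α (s * s⁻¹)) ∧
      (∀ s t : S, k (s * t) = k s * M.lam s (k t) * f s t)) ↔
    (∃ g : S → A, (∀ s : S, g s * (g s)⁻¹ = M.α (s * s⁻¹)) ∧
      (∀ s t : S, f s t = M.lam s (g t) * (g (s * t))⁻¹ * g s)) := by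
  haveI : Std.Commutative (α := A) (· * ·) := ⟨hA⟩
  haveI : Std.Associative (α := A) (· * ·) := ⟨mul_assoc⟩
  constructor
  · rintro ⟨k, hk1, hk2⟩
    refine ⟨fun s => (k s)⁻¹, fun s => by rw [IS_inv_inv, hA, hk1], fun s t => ?_⟩
    show f s t = M.lam s (k t)⁻¹ * ((k (s * t))⁻¹)⁻¹ * (k s)⁻¹
    rw [IS_inv_inv, hk2 s t]
    have key : M.lam s (k t)⁻¹ * (k s * M.lam s (k t) * f s t) * (k s)⁻¹
        = (M.lam s (k t)⁻¹ * M.lam s (k t)) * ((k s * (k s)⁻¹) * f s t) := by ac_rfl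
    rw [key, ← M.lam_mul, hA ((k t)⁻¹) (k t), hk1 t,
      M.lam_alpha s (t * t⁻¹) (IS_idem_mul_inv t), hk1 s, ← mul_assoc,
      ← M.α_mul _ _ (IS_conj_idem s (IS_idem_mul_inv t)) (IS_idem_mul_inv s),
      IS_conj_absorb s (IS_idem_mul_inv t), ← mul_assoc s t t⁻¹,
      ← hmem s t, InverseSemigroup.mul_inv_mul]
  · rintro ⟨g, hg1, hg2⟩
    refine ⟨fun s => (g s)⁻¹, fun s => by rw [IS_inv_inv, hA, hg1], fun s t => ?_⟩
    show (g (s * t))⁻¹ = (g s)⁻¹ * M.lam s (g t)⁻¹ * f s t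
    rw [hg2 s t]
    have key : (g s)⁻¹ * M.lam s (g t)⁻¹ * (M.lam s (g t) * (g (s * t))⁻¹ * g s)
        = (M.lam s (g t)⁻¹ * M.lam s (g t)) * ((g s * (g s)⁻¹) * (g (s * t))⁻¹) := by ac_rfl
    rw [key, ← M.lam_mul, hA ((g t)⁻¹) (g t), hg1 t,
      M.lam_alpha s (t * t⁻¹) (IS_idem_mul_inv t), hg1 s, ← mul_assoc,
      ← M.α_mul _ _ (IS_conj_idem s (IS_idem_mul_inv t)) (IS_idem_mul_inv s),
      IS_conj_absorb s (IS_idem_mul_inv t), ← mul_assoc s t t⁻¹]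
    have h : g (s * t) * (g (s * t))⁻¹ = M.α (s * t * t⁻¹ * s⁻¹) := by
      rw [hg1 (s * t), IS_mul_inv_rev, ← mul_assoc]
    rw [← h, hA (g (s * t)) ((g (s * t))⁻¹)]
    exact (InverseSemigroup.inv_mul_inv _).symm
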